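/- arXiv:2501.17287 — 5 statements merged into one kernel-verified Lean document; each statement's English description precedes it below -/
import Mathlib

section
/- Let F be an edge of an oriented matroid O and e ∈ supp(F). Then there is, up to sign reversal, a unique cocircuit Z with e ∉ supp(Z) and supp(Z) ⊆ supp(F). -/
open Set

variable {E : Type*}

/-- Support of a sign vector. -/
def supp (X : E → SignType) : Set E := {e | X e ≠ 0}

/-- Zero set of a sign vector. -/
def zset (X : E → SignType) : Set E := {e | X e = 0}

/-- Composition of sign vectors: first nonzero entry wins. -/
def scomp (X Y : E → SignType) : E → SignType := fun e => if X e ≠ 0 then X e else Y e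

/-- Separation set of two sign vectors. -/
def ssep (X Y : E → SignType) : Set E := {e | X e ≠ 0 ∧ X e = -Y e}

/-- `G` covers `F` in the lattice of flats of `M`. -/
def Matroid.FlatCovBy (M : Matroid E) (F G : Set E) : Prop :=
  M.IsFlat F ∧ M.IsFlat G ∧ F ⊂ G ∧ ∀ F', M.IsFlat F' → F ⊆ F' → F' ⊆ G → F' = F ∨ F' = G

/-- A hyperplane: a flat covered by the ground set (corank 1 flat). -/
def Matroid.IsHyperplane (M : Matroid E) (H : Set E) : Prop := M.FlatCovBy H M.E

/-- A coline: a flat of corank 2. -/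
def Matroid.IsColine (M : Matroid E) (F : Set E) : Prop :=
  ∃ H, M.FlatCovBy F H ∧ M.IsHyperplane H

/-- A coplane: a flat of corank 3. -/
def Matroid.IsCoplane (M : Matroid E) (F : Set E) : Prop :=
  ∃ G, M.FlatCovBy F G ∧ M.IsColine G

/-- An oriented matroid, given by its set of cocircuits (sign vectors satisfying the
cocircuit axioms), bundled with its underlying matroid, whose hyperplanes are exactly
the zero sets of the cocircuits. -/
structure OM (E : Type*) where
  M : Matroid E
  ground_eq : M.E = Set.univ
  cocircuits : Set (E → SignType)
  zero_not_mem : (0 : E → SignType) ∉ cocircuits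
  neg_mem : ∀ X ∈ cocircuits, -X ∈ cocircuits
  supp_incomp : ∀ X ∈ cocircuits, ∀ Y ∈ cocircuits, supp X ⊆ supp Y → X = Y ∨ X = -Y
  elim_ax : ∀ X ∈ cocircuits, ∀ Y ∈ cocircuits, X ≠ -Y → ∀ e ∈ ssep X Y,
      ∃ Z ∈ cocircuits, Z e = 0 ∧ ∀ f, Z f = X f ∨ Z f = Y f ∨ Z f = 0
  hyperplane_iff : ∀ H : Set E, M.IsHyperplane H ↔ ∃ X ∈ cocircuits, zset X = H

/-- Covectors: the zero vector together with compositions of cocircuits. -/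
def OM.IsCovector (O : OM E) (X : E → SignType) : Prop :=
  X = 0 ∨ ∃ L : List (E → SignType), L ≠ [] ∧ (∀ Y ∈ L, Y ∈ O.cocircuits) ∧ X = L.foldr scomp 0

/-- An edge: a covector whose zero set is a coline of the underlying matroid. -/
def OM.IsEdge (O : OM E) (F : E → SignType) : Prop := O.IsCovector F ∧ O.M.IsColine (zset F)

/-- Two cocircuits are comodular iff their composition is an edge, i.e. its zero set
is a coline. -/
def OM.Comod (O : OM E) (X Y : E → SignType) : Prop := O.M.IsColine (zset (scomp X Y))

def OM.IsLoopE (O : OM E) (e : E) : Prop := ¬ O.M.Indep {e}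

def OM.IsColoopE (O : OM E) (e : E) : Prop := ∀ B, O.M.IsBase B → e ∈ B

/-- `Z` is the result of cocircuit elimination of `g` between `-X` and `Y`:
a cocircuit vanishing at `g` with support inside `supp((-X) ∘ Y) \ {g}`. -/
def OM.ElimWit (O : OM E) (g : E) (X Y Z : E → SignType) : Prop :=
  Z ∈ O.cocircuits ∧ Z g = 0 ∧ supp Z ⊆ supp (scomp (-X) Y) \ {g}

/-- The direction of the pair `(X,Y)` in the program `(O,g,f)` is `s`:
eliminating `g` between `-X` and `Y` yields `Z` with `Z f = s`. -/
def OM.DirIs (O : OM E) (g f : E) (X Y : E → SignType) (s : SignType) : Prop :=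
  ∃ Z, O.ElimWit g X Y Z ∧ Z f = s


section Aux

variable {α : Type*} {M : Matroid α}

lemma Matroid.flat_closure' (M : Matroid α) (X : Set α) : M.IsFlat (M.closure X) := by
  rw [Matroid.closure_def]
  haveI : Nonempty ↑{F | M.IsFlat F ∧ X ∩ M.E ⊆ F} :=
    ⟨⟨M.E, M.ground_isFlat, Set.inter_subset_right⟩⟩
  rw [Set.sInter_eq_iInter]
  exact Matroid.IsFlat.iInter fun F => F.2.1

lemma flatCovBy_closure_insert {A : Set α} (hA : M.IsFlat A) {e : α}
    (heE : e ∈ M.E) (heA : e ∉ A) : M.FlatCovBy A (M.closure (insert e A)) := by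
  have hsub : insert e A ⊆ M.E := Set.insert_subset heE hA.subset_ground
  have hecl : e ∈ M.closure (insert e A) :=
    M.subset_closure _ hsub (Set.mem_insert _ _)
  have hAcl : A ⊆ M.closure (insert e A) :=
    (Set.subset_insert e A).trans (M.subset_closure _ hsub)
  refine ⟨hA, M.flat_closure' _, ⟨hAcl, fun h => heA (h hecl)⟩, ?_⟩
  intro F' hF' hAF' hF'cl
  by_cases hFA : F' = A
  · exact Or.inl hFA
  · right
    obtain ⟨f, hfF', hfA⟩ : ∃ f, f ∈ F' ∧ f ∉ A := by
      by_contra h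
      push_neg at h
      exact hFA (hAF'.antisymm' h)
    have hf : f ∈ M.closure (insert e A) \ M.closure A := by
      rw [hA.closure]
      exact ⟨hF'cl hfF', hfA⟩
    have hexch := Matroid.closure_exchange hf
    have he' : e ∈ F' := by
      have h1 : M.closure (insert f A) ⊆ F' := by
        rw [← hF'.closure]
        exact M.closure_subset_closure (Set.insert_subset hfF' hAF')
      exact h1 hexch.1
    refine hF'cl.antisymm ?_
    rw [← hF'.closure]
    exact M.closure_subset_closure (Set.insert_subset he' hAF')

lemma isHyperplane_closure_insert {L : Set α} (hL : M.IsColine L) {e : α}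
    (heE : e ∈ M.E) (heL : e ∉ L) : M.IsHyperplane (M.closure (insert e L)) := by
  obtain ⟨H, hLH, hHE⟩ := hL
  have hLflat : M.IsFlat L := hLH.1
  have hHflat : M.IsFlat H := hLH.2.1
  have hLHsub : L ⊆ H := hLH.2.2.1.1
  set G := M.closure (insert e L) with hG
  have hGflat : M.IsFlat G := M.flat_closure' _
  have hcov : M.FlatCovBy L G := flatCovBy_closure_insert hLflat heE heL
  have heG : e ∈ G :=
    M.subset_closure _ (Set.insert_subset heE hLflat.subset_ground) (Set.mem_insert _ _)
  have hLG : L ⊆ G := hcov.2.2.1.1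
  by_cases heH : e ∈ H
  · -- G ⊆ H, so G = H since L ⋖ H
    have hGH : G ⊆ H := by
      rw [← hHflat.closure]
      exact M.closure_subset_closure (Set.insert_subset heH hLHsub)
    rcases hLH.2.2.2 G hGflat hLG hGH with h | h
    · exact absurd (h ▸ heG) heL
    · rw [h]; exact hHE
  · -- e ∉ H
    have hGneE : G ≠ M.E := by
      intro h
      rcases hcov.2.2.2 H hHflat hLHsub (h ▸ hHflat.subset_ground) with h' | h'
      · exact hLH.2.2.1.2.elim (h' ▸ Set.Subset.rfl)
      · exact hHE.2.2.1.2.elim ((h'.trans h) ▸ Set.Subset.rfl)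
    obtain ⟨a, haH, haL⟩ : ∃ a, a ∈ H ∧ a ∉ L := by
      by_contra h
      push_neg at h
      exact hLH.2.2.1.2 h
    have haE : a ∈ M.E := hHflat.subset_ground haH
    have hH_eq : M.closure (insert a L) = H := by
      have hflt : M.IsFlat (M.closure (insert a L)) := M.flat_closure' _
      have hsub : M.closure (insert a L) ⊆ H := by
        rw [← hHflat.closure]
        exact M.closure_subset_closure (Set.insert_subset haH hLHsub)
      have hLsub : L ⊆ M.closure (insert a L) :=
        (Set.subset_insert a L).trans
          (M.subset_closure _ (Set.insert_subset haE hLflat.subset_ground))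
      rcases hLH.2.2.2 _ hflt hLsub hsub with h | h
      · exact absurd (h ▸ M.subset_closure _ (Set.insert_subset haE hLflat.subset_ground)
          (Set.mem_insert _ _)) haL
      · exact h
    have haG : a ∉ G := by
      intro haG
      have hHG : H ⊆ G := by
        rw [← hH_eq, ← hGflat.closure]
        exact M.closure_subset_closure (Set.insert_subset haG hLG)
      rcases hHE.2.2.2 G hGflat hHG hGflat.subset_ground with h | h
      · exact heH (h ▸ heG)
      · exact hGneE h
    have hcov2 : M.FlatCovBy G (M.closure (insert a G)) :=
      flatCovBy_closure_insert hGflat haE haG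
    have hEeq : M.closure (insert a G) = M.E := by
      refine (M.closure_subset_ground _).antisymm ?_
      have hHsub : H ⊆ M.closure (insert a G) := by
        rw [← hH_eq]
        exact M.closure_subset_closure (Set.insert_subset_insert hLG)
      have heHsub : insert e H ⊆ M.closure (insert a G) :=
        Set.insert_subset
          ((M.subset_closure _ (Set.insert_subset haE hGflat.subset_ground))
            (Set.mem_insert_of_mem _ heG)) hHsub
      have h1 : M.closure (insert e H) = M.E := by
        have hflt : M.IsFlat (M.closure (insert e H)) := M.flat_closure' _
        have hHsub' : H ⊆ M.closure (insert e H) :=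
          (Set.subset_insert e H).trans
            (M.subset_closure _ (Set.insert_subset heE hHflat.subset_ground))
        rcases hHE.2.2.2 _ hflt hHsub' (M.closure_subset_ground _) with h | h
        · exact absurd (h ▸ M.subset_closure _ (Set.insert_subset heE hHflat.subset_ground)
            (Set.mem_insert _ _)) heH
        · exact h
      rw [← h1]
      have hflt : M.IsFlat (M.closure (insert a G)) := M.flat_closure' _
      rw [← hflt.closure]
      exact M.closure_subset_closure heHsub
    exact show M.FlatCovBy G M.E from hEeq ▸ hcov2

end Aux

/-- on the line through an edge `F` there is, up to sign reversal, a unique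
cocircuit avoiding a given `e ∈ supp F` with support inside `supp F`. -/
theorem unique_cocircuit_on_edge (O : OM E) (F : E → SignType) (hF : O.IsEdge F)
    (e : E) (he : e ∈ supp F) :
    ∃ Z ∈ O.cocircuits, Z e = 0 ∧ supp Z ⊆ supp F ∧
      ∀ Z' ∈ O.cocircuits, Z' e = 0 → supp Z' ⊆ supp F → Z' = Z ∨ Z' = -Z := by
  obtain ⟨-, hcoline⟩ := hF
  set L := zset F with hL
  have hLflat : O.M.IsFlat L := hcoline.choose_spec.1.1
  have heE : e ∈ O.M.E := by rw [O.ground_eq]; trivial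
  have heL : e ∉ L := he
  have hsubE : insert e L ⊆ O.M.E := Set.insert_subset heE hLflat.subset_ground
  have hhyp := isHyperplane_closure_insert hcoline heE heL
  obtain ⟨Z, hZ, hZz⟩ := (O.hyperplane_iff _).mp hhyp
  have hLsub : L ⊆ zset Z := by
    rw [hZz]
    exact (Set.subset_insert e L).trans (O.M.subset_closure _ hsubE)
  have hZe : Z e = 0 := by
    have : e ∈ zset Z := by
      rw [hZz]; exact O.M.subset_closure _ hsubE (Set.mem_insert _ _)
    exact this
  refine ⟨Z, hZ, hZe, ?_, ?_⟩
  · intro x hx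
    by_contra h
    have hxL : x ∈ L := not_not.mp h
    exact hx (hLsub hxL)
  · intro Z' hZ' hZ'e hsupp
    have hz'hyp : O.M.IsHyperplane (zset Z') := (O.hyperplane_iff _).mpr ⟨Z', hZ', rfl⟩
    have hflat : O.M.IsFlat (zset Z') := hz'hyp.1
    have h1 : insert e L ⊆ zset Z' := by
      refine Set.insert_subset hZ'e fun x hx => ?_
      by_contra h
      exact (hsupp h) hx
    have h2 : zset Z ⊆ zset Z' := by
      rw [hZz, ← hflat.closure]
      exact O.M.closure_subset_closure h1
    have hsupp2 : supp Z' ⊆ supp Z := fun x hx => fun h0 => hx (h2 h0)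
    exact O.supp_incomp Z' hZ' Z hZ hsupp2
end

section
/- Let (O,g,f) be an oriented matroid program and X, Y comodular cocircuits with X_f = Y_f = -X_g = -Y_g ≠ 0. Then X →_{g,f} Y if and only if X →_{f,g} Y. -/
open Set

variable {E : Type*}

section Aux
open Set
variable {E : Type*}

lemma my_closure_flat (M : Matroid E) (X : Set E) : M.IsFlat (M.closure X) := by
  rw [Matroid.closure_def]
  have hne : (M.E) ∈ {F | M.IsFlat F ∧ X ∩ M.E ⊆ F} := ⟨M.ground_isFlat, inter_subset_right⟩
  have : Nonempty {F // F ∈ {F | M.IsFlat F ∧ X ∩ M.E ⊆ F}} := ⟨⟨M.E, hne⟩⟩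
  rw [sInter_eq_iInter]
  exact Matroid.IsFlat.iInter fun i => i.2.1

lemma sign_cases (a : SignType) (h : a ≠ 0) : a = 1 ∨ a = -1 := by
  cases a <;> simp_all

/-- Any hyperplane containing a coline `F` and a point `g ∉ F` equals `cl (insert g F)`. -/
lemma hyp_eq_closure (M : Matroid E) (hground : M.E = univ) {F H : Set E} {g : E}
    (hF : M.IsColine F) (hH : M.IsHyperplane H) (hFH : F ⊆ H) (hgH : g ∈ H) (hgF : g ∉ F) :
    H = M.closure (insert g F) := by
  obtain ⟨H0, ⟨hFflat, hH0flat, hFH0, hcov⟩, hH0flat', _, hH0E, hcovE⟩ := hF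
  obtain ⟨hHflat, _, hHE, hcovH⟩ := hH
  set G := M.closure (insert g F) with hGdef
  have hsub : ∀ S : Set E, S ⊆ M.E := fun S => by simp [hground]
  have hGflat : M.IsFlat G := my_closure_flat M _
  have hsubG : insert g F ⊆ G := M.subset_closure _ (hsub _)
  have hGH : G ⊆ H := by
    have h1 : M.closure (insert g F) ⊆ M.closure H :=
      M.closure_subset_closure (insert_subset hgH hFH)
    rwa [hHflat.closure] at h1
  have hFG : F ⊆ G := (subset_insert g F).trans hsubG
  have hGneF : G ≠ F := fun h => hgF (h ▸ hsubG (mem_insert g F))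
  have hHneE : H ≠ M.E := hHE.ne
  by_cases hH0H : H0 ⊆ H
  · -- then H = H0, and G = H0 by the covering property
    have hHeq : H = H0 := by
      rcases hcovE H hHflat hH0H hHflat.subset_ground with h | h
      · exact h
      · exact absurd h hHneE
    rcases hcov G hGflat hFG (hHeq ▸ hGH) with h | h
    · exact absurd h hGneF
    · rw [hHeq, ← h]
  · obtain ⟨e, heH0, heH⟩ := not_subset.mp hH0H
    by_cases hgH0 : g ∈ H0
    · -- G ⊆ H0, so G = H0 ⊆ H, contradicting e ∉ H
      have hGH0 : G ⊆ H0 := by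
        have h1 : M.closure (insert g F) ⊆ M.closure H0 :=
          M.closure_subset_closure (insert_subset hgH0 (hFH0.subset))
        rwa [hH0flat.closure] at h1
      rcases hcov G hGflat hFG hGH0 with h | h
      · exact absurd h hGneF
      · exact absurd (hGH (h ▸ heH0)) heH
    · -- exchange argument
      have heF : e ∉ F := fun h => heH (hFH h)
      -- H0 = closure (insert e F)
      have hK : M.closure (insert e F) = H0 := by
        have hKflat := my_closure_flat M (insert e F)
        have hKsub : M.closure (insert e F) ⊆ H0 := by
          have h1 : M.closure (insert e F) ⊆ M.closure H0 :=
            M.closure_subset_closure (insert_subset heH0 hFH0.subset)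
          rwa [hH0flat.closure] at h1
        have hFK : F ⊆ M.closure (insert e F) :=
          (subset_insert e F).trans (M.subset_closure _ (hsub _))
        rcases hcov _ hKflat hFK hKsub with h | h
        · exact absurd h (fun hh => heF (hh ▸ M.subset_closure _ (hsub _) (mem_insert e F)))
        · exact h
      -- closure (insert g H0) = M.E
      have hE : M.closure (insert g H0) = M.E := by
        have hKflat := my_closure_flat M (insert g H0)
        have hK1 : H0 ⊆ M.closure (insert g H0) :=
          (subset_insert g H0).trans (M.subset_closure _ (hsub _))
        rcases hcovE _ hKflat hK1 (M.closure_subset_ground _) with h | h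
        · exact absurd h (fun hh => hgH0 (hh ▸ M.subset_closure _ (hsub _) (mem_insert g H0)))
        · exact h
      have hEeq : M.closure (insert e (insert g F)) = M.E := by
        rw [insert_comm, ← Matroid.closure_insert_closure_eq_closure_insert, hK, hE]
      -- now H ⊆ G
      have hHG : H ⊆ G := by
        intro x hx
        by_contra hxG
        have hx1 : x ∈ M.closure (insert e (insert g F)) \ M.closure (insert g F) :=
          ⟨hEeq ▸ (hHflat.subset_ground hx), hxG⟩
        have hx2 := Matroid.closure_exchange hx1
        have : M.closure (insert x (insert g F)) ⊆ H := by
          have h1 : M.closure (insert x (insert g F)) ⊆ M.closure H :=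
            M.closure_subset_closure (insert_subset hx (insert_subset hgH hFH))
          rwa [hHflat.closure] at h1
        exact heH (this hx2.1)
      exact hHG.antisymm hGH
end Aux

section Main
open Set
variable {E : Type*}

lemma sign_neg_zero (a : SignType) : (-a = 0) ↔ a = 0 := by cases a <;> simp

lemma dir_one (O : OM E) (g f : E) (X Y : E → SignType) (hX : X ∈ O.cocircuits)
    (hY : Y ∈ O.cocircuits) (hcm : O.Comod X Y) (hf0 : X f ≠ 0) (hg0 : X g ≠ 0) :
    O.DirIs g f X Y 1 → O.DirIs f g X Y 1 := by
  rintro ⟨Z, ⟨hZC, hZg, hZsupp⟩, hZf⟩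
  set F := zset (scomp X Y) with hF
  have hFmem : ∀ e, e ∈ F ↔ (X e = 0 ∧ Y e = 0) := by
    intro e; simp only [hF, zset, scomp, mem_setOf_eq]
    by_cases h : X e = 0 <;> simp [h]
  have hsupp_mem : ∀ e, e ∈ supp (scomp (-X) Y) ↔ ¬(X e = 0 ∧ Y e = 0) := by
    intro e
    simp only [supp, scomp, mem_setOf_eq, Pi.neg_apply, ne_eq]
    by_cases h : X e = 0 <;> simp [h, sign_neg_zero]
  have hgF : g ∉ F := fun h => hg0 ((hFmem g).mp h).1
  have hFZ : F ⊆ zset Z := by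
    intro e he
    by_contra hZe
    exact ((hsupp_mem e).mp (hZsupp hZe).1) ((hFmem e).mp he)
  obtain ⟨X', hX'C, hX'f, hX'g, hX'z⟩ :
      ∃ X', X' ∈ O.cocircuits ∧ X' f = -1 ∧ X' g ≠ 0 ∧ ∀ e, X e = 0 → X' e = 0 := by
    rcases sign_cases (X f) hf0 with h | h
    · refine ⟨-X, O.neg_mem X hX, by simp [h], ?_, fun e he => by simp [he]⟩
      simpa [sign_neg_zero] using hg0
    · exact ⟨X, hX, h, hg0, fun e he => he⟩
  have hZf1 : Z f = 1 := hZf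
  have hfsep : f ∈ ssep Z X' := by
    refine ⟨by rw [hZf1]; exact one_ne_zero, by rw [hZf1, hX'f]; rfl⟩
  have hne : Z ≠ -X' := by
    intro h
    have h2 : Z g = -X' g := by rw [h]; rfl
    rw [hZg] at h2
    exact hX'g ((sign_neg_zero _).mp h2.symm)
  obtain ⟨W, hWC, hWf, hWp⟩ := O.elim_ax Z hZC X' hX'C hne f hfsep
  have hFW : F ⊆ zset W := by
    intro e he
    rcases hWp e with h | h | h
    · rw [show (e ∈ zset W) = (W e = 0) from rfl, h]; exact hFZ he
    · rw [show (e ∈ zset W) = (W e = 0) from rfl, h]; exact hX'z e ((hFmem e).mp he).1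
    · exact h
  have hWsupp : supp W ⊆ supp (scomp (-X) Y) \ {f} := by
    intro e he
    refine ⟨(hsupp_mem e).mpr fun hc => he (hFW ((hFmem e).mpr hc)), ?_⟩
    intro h
    rw [mem_singleton_iff] at h
    subst h
    exact he hWf
  have hWg : W g ≠ 0 := by
    intro hWg0
    have hzZ : O.M.IsHyperplane (zset Z) := (O.hyperplane_iff (zset Z)).mpr ⟨Z, hZC, rfl⟩
    have hzW : O.M.IsHyperplane (zset W) := (O.hyperplane_iff (zset W)).mpr ⟨W, hWC, rfl⟩
    have hcol : O.M.IsColine F := hcm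
    have e1 := hyp_eq_closure O.M O.ground_eq hcol hzZ hFZ hZg hgF
    have e2 := hyp_eq_closure O.M O.ground_eq hcol hzW hFW hWg0 hgF
    have : f ∈ zset Z := by rw [e1, ← e2]; exact hWf
    rw [show (f ∈ zset Z) = (Z f = 0) from rfl, hZf1] at this
    exact one_ne_zero this
  rcases sign_cases (W g) hWg with h | h
  · exact ⟨W, ⟨hWC, hWf, hWsupp⟩, h⟩
  · refine ⟨-W, ⟨O.neg_mem W hWC, by simp [hWf], ?_⟩, by simp [h]⟩
    intro e he
    refine hWsupp ?_
    simpa [supp, sign_neg_zero] using he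
end Main


/-- with `X_f = Y_f = -X_g = -Y_g ≠ 0`, the direction is preserved when the
objective and the hyperplane at infinity are interchanged. -/
theorem dir_swap_fg_neg (O : OM E) (g f : E) (hgf : g ≠ f)
    (hg : ¬ O.IsLoopE g) (hf : ¬ O.IsColoopE f)
    (X Y : E → SignType) (hX : X ∈ O.cocircuits) (hY : Y ∈ O.cocircuits)
    (hcm : O.Comod X Y) (h1 : X f = Y f) (h2 : X f = -(X g)) (h3 : X g = Y g)
    (h0 : X g ≠ 0) :
    O.DirIs g f X Y 1 ↔ O.DirIs f g X Y 1 := by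
  have hf0 : X f ≠ 0 := by
    rw [h2]
    intro h
    exact h0 ((sign_neg_zero _).mp h)
  constructor
  · exact dir_one O g f X Y hX hY hcm hf0 h0
  · exact dir_one O f g X Y hX hY hcm h0 hf0
end

section
/- Let O[I^α] = O ∪ p be a lexicographic extension with I = [e₁,…,e_k] independent, and let Y be a cocircuit of O ∪ p with Y_p = 0. Then Y is an old cocircuit (i.e., Y restricted to the old ground set is a cocircuit of O) if and only if the index of Y with respect to I equals k+1 (i.e., Y vanishes on all of e₁,…,e_k). -/
open Set

variable {E : Type*}

/-- Extend a sign vector on `E` to `Option E`, with value `s` on the new element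
`p = none`. -/
def extendP (X : E → SignType) (s : SignType) : Option E → SignType :=
  fun o => o.elim s X

/-- Restrict a sign vector on `Option E` to the old ground set `E`. -/
def restrictP (Z : Option E → SignType) : E → SignType := fun e => Z (some e)

/-- A localization is compatible with negation of cocircuits. -/
def IsOMLocalization (O : OM E) (σ : (E → SignType) → SignType) : Prop :=
  ∀ X ∈ O.cocircuits, σ (-X) = -σ X

/-- The cocircuits of the single-element extension determined by the localization `σ`:
the old cocircuits `(Y, σ(Y))` and the new cocircuits `(Y¹ ∘ Y², 0)` coming from
conformal comodular pairs with opposite nonzero localization values. -/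
def extCocircuits (O : OM E) (σ : (E → SignType) → SignType) :
    Set (Option E → SignType) :=
  {Z | ∃ Y ∈ O.cocircuits, Z = extendP Y (σ Y)} ∪
  {Z | ∃ Y₁ ∈ O.cocircuits, ∃ Y₂ ∈ O.cocircuits, ssep Y₁ Y₂ = ∅ ∧
      σ Y₁ = -σ Y₂ ∧ σ Y₁ ≠ 0 ∧ O.M.IsColine (zset (scomp Y₁ Y₂)) ∧
      Z = extendP (scomp Y₁ Y₂) 0}

/-- `O' = O ∪ p` (with `p = none`) is the single-element extension of `O` given by the
localization `σ`. -/
def IsExtension (O : OM E) (O' : OM (Option E)) (σ : (E → SignType) → SignType) : Prop :=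
  IsOMLocalization O σ ∧ O'.cocircuits = extCocircuits O σ

/-- A cocircuit of the extension is old if it is derived from a cocircuit of `O`. -/
def IsOld (O : OM E) (σ : (E → SignType) → SignType) (Z : Option E → SignType) : Prop :=
  ∃ Y ∈ O.cocircuits, Z = extendP Y (σ Y)

/-- The localization of the lexicographic extension `O[e₁^{α₁},…,e_k^{α_k}]`, where the
list `L` consists of the pairs `(eᵢ, αᵢ)`: the value is `αᵢ · Y_{eᵢ}` for the first `i`
with `Y_{eᵢ} ≠ 0`, and `0` if there is none. -/
def lexSigma : List (E × SignType) → (E → SignType) → SignType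
  | [], _ => 0
  | p :: t, Y => if Y p.1 = 0 then lexSigma t Y else p.2 * Y p.1

/-- The (1-based) index of a sign vector `Y` w.r.t. an ordered list `I`: the least `i`
with `Y_{eᵢ} ≠ 0`, and `|I| + 1` if `Y` vanishes on all of `I`. -/
def lexIndex : List E → (E → SignType) → ℕ
  | [], _ => 1
  | e :: t, Y => if Y e = 0 then lexIndex t Y + 1 else 1

/-- `O'` is the lexicographic extension `O[I^α]` of `O`, where `L` is the list of pairs
`(eᵢ, αᵢ)`, the `eᵢ` distinct and independent and the `αᵢ` nonzero signs. -/
def IsLexExtension (O : OM E) (O' : OM (Option E)) (L : List (E × SignType)) : Prop :=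
  (L.map Prod.fst).Nodup ∧ O.M.Indep {e | e ∈ L.map Prod.fst} ∧
    (∀ p ∈ L, p.2 ≠ 0) ∧ IsExtension O O' (lexSigma L)


lemma lexIndex_eq_succ_iff (l : List E) (X : E → SignType) :
    lexIndex l X = l.length + 1 ↔ ∀ e ∈ l, X e = 0 := by
  induction l with
  | nil => simp [lexIndex]
  | cons e t ih =>
    by_cases h : X e = 0
    · simp only [lexIndex, if_pos h, List.length_cons, List.mem_cons]
      constructor
      · intro h1 f hf
        rcases hf with rfl | hf
        · exact h
        · exact (ih.mp (by omega)) f hf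
      · intro h1
        have := ih.mpr (fun f hf => h1 f (Or.inr hf))
        omega
    · simp only [lexIndex, if_neg h, List.length_cons, List.mem_cons]
      constructor
      · omega
      · intro h1; exact absurd (h1 e (Or.inl rfl)) h

lemma lexSigma_eq_zero_iff (L : List (E × SignType)) (h : ∀ p ∈ L, p.2 ≠ 0)
    (X : E → SignType) : lexSigma L X = 0 ↔ ∀ p ∈ L, X p.1 = 0 := by
  induction L with
  | nil => simp [lexSigma]
  | cons q t ih =>
    by_cases hq : X q.1 = 0
    · simp only [lexSigma, if_pos hq, List.mem_cons]
      rw [ih (fun p hp => h p (List.mem_cons_of_mem _ hp))]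
      constructor
      · intro h1 p hp
        rcases hp with rfl | hp
        · exact hq
        · exact h1 p hp
      · intro h1 p hp; exact h1 p (Or.inr hp)
    · simp only [lexSigma, if_neg hq, List.mem_cons]
      constructor
      · intro h1
        exact absurd (mul_eq_zero.mp h1) (by push_neg; exact ⟨h q List.mem_cons_self, hq⟩)
      · intro h1; exact absurd (h1 q (Or.inl rfl)) hq

lemma not_coline_of_hyperplane (M : Matroid E) (H : Set E)
    (h1 : M.IsHyperplane H) : ¬ M.IsColine H := by
  rintro ⟨G, ⟨hHflat, hGflat, hHG, -⟩, ⟨-, -, hGE, -⟩⟩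
  obtain ⟨-, -, hHE, hmax⟩ := h1
  rcases hmax G hGflat hHG.subset hGflat.subset_ground with h | h
  · exact hHG.ne h.symm
  · exact hGE.ne h

/-- a cocircuit of a lexicographic extension vanishing on the new element
is old iff its index equals `k + 1`, i.e. it vanishes on all of `e₁,…,e_k`. -/
theorem lex_old_iff_index_top (O : OM E) (O' : OM (Option E))
    (L : List (E × SignType)) (hlex : IsLexExtension O O' L)
    (Y : Option E → SignType) (hY : Y ∈ O'.cocircuits) (hp : Y none = 0) :
    restrictP Y ∈ O.cocircuits ↔
      lexIndex (L.map Prod.fst) (restrictP Y) = L.length + 1 := by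
  obtain ⟨hnodup, hindep, halpha, hloc, hcc⟩ := hlex
  rw [hcc] at hY
  rcases hY with ⟨W, hW, rfl⟩ | ⟨Y₁, hY₁, Y₂, hY₂, hconf, hopp, hne, hcoline, rfl⟩
  · have hrw : restrictP (extendP W (lexSigma L W)) = W := rfl
    have hs : lexSigma L W = 0 := hp
    rw [hrw]
    constructor
    · intro _
      rw [show L.length = (List.map Prod.fst L).length by simp, lexIndex_eq_succ_iff]
      intro e he
      obtain ⟨p, hpL, rfl⟩ := List.mem_map.mp he
      exact (lexSigma_eq_zero_iff L halpha W).mp hs p hpL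
    · intro _; exact hW
  · have hrw : restrictP (extendP (scomp Y₁ Y₂) 0) = scomp Y₁ Y₂ := rfl
    rw [hrw]
    constructor
    · intro hmem
      exfalso
      have hhyp : O.M.IsHyperplane (zset (scomp Y₁ Y₂)) :=
        (O.hyperplane_iff _).mpr ⟨scomp Y₁ Y₂, hmem, rfl⟩
      exact not_coline_of_hyperplane O.M _ hhyp hcoline
    · intro hidx
      exfalso
      apply hne
      rw [show L.length = (List.map Prod.fst L).length by simp, lexIndex_eq_succ_iff] at hidx
      rw [lexSigma_eq_zero_iff L halpha Y₁]
      intro p hp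
      have := hidx p.1 (List.mem_map.mpr ⟨p, hp, rfl⟩)
      unfold scomp at this
      by_cases h : Y₁ p.1 = 0
      · exact h
      · simp [h] at this
end

section
/- Let (O,g,f) be an oriented matroid program and O' = O ∪ p = O[I]^+ a positive lexicographic extension in general position where I is an ordered base of O \ f. Then the program (O',p,f) is bounded, and it is feasible if and only if (O,g,f) is feasible. -/
open Set

variable {E : Type*}

/-- The program is feasible: some cocircuit is nonnegative everywhere. -/
def OM.Feasible (O : OM E) : Prop := ∃ X ∈ O.cocircuits, ∀ e, 0 ≤ X e

/-- The program `(O,g,·)` is bounded: every cocircuit of the feasible region (nonnegative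
away from `g`) is positive at `g`. -/
def OM.Bounded (O : OM E) (g : E) : Prop :=
  ∀ X ∈ O.cocircuits, (∀ e, e ≠ g → 0 ≤ X e) → X g = 1

lemma lexSigma_spec {L : List (E × SignType)} (hpos : ∀ p ∈ L, p.2 = 1) {Y : E → SignType}
    (h : lexSigma L Y ≠ 0) : ∃ p ∈ L, Y p.1 = lexSigma L Y := by
  induction L with
  | nil => simp [lexSigma] at h
  | cons p t ih =>
    by_cases hp : Y p.1 = 0
    · simp only [lexSigma, hp, if_pos rfl] at h ⊢
      simp only [if_true]
      obtain ⟨q, hq, hq2⟩ := ih (fun q hq => hpos q (List.mem_cons_of_mem _ hq)) h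
      exact ⟨q, List.mem_cons_of_mem _ hq, hq2⟩
    · refine ⟨p, List.mem_cons_self, ?_⟩
      simp [lexSigma, hp, hpos p List.mem_cons_self]

/- no new cocircuit of a positive lex extension in general position is nonnegative -/
lemma no_nonneg_new {L : List (E × SignType)} (hpos : ∀ p ∈ L, p.2 = 1)
    {Y₁ Y₂ : E → SignType} (hsep : ssep Y₁ Y₂ = ∅)
    (hopp : lexSigma L Y₁ = -lexSigma L Y₂) (hne : lexSigma L Y₁ ≠ 0)
    (hnn : ∀ e, 0 ≤ scomp Y₁ Y₂ e) : False := by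
  have hne2 : lexSigma L Y₂ ≠ 0 := by
    intro h; rw [h] at hopp; simp at hopp; exact hne hopp
  -- one of the two sigmas is -1
  rcases (by rcases h1 : lexSigma L Y₁ with _ | _ | _ <;>
      rcases h2 : lexSigma L Y₂ with _ | _ | _ <;>
      simp_all : lexSigma L Y₁ = -1 ∨ lexSigma L Y₂ = -1) with hneg | hneg
  · obtain ⟨p, _, hp⟩ := lexSigma_spec hpos hne
    rw [hneg] at hp
    have := hnn p.1
    simp only [scomp, hp] at this
    simp at this
  · obtain ⟨p, _, hp⟩ := lexSigma_spec hpos hne2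
    rw [hneg] at hp
    have hsep' : ¬ (Y₁ p.1 ≠ 0 ∧ Y₁ p.1 = -Y₂ p.1) := by
      intro hc
      have : p.1 ∈ ssep Y₁ Y₂ := hc
      rw [hsep] at this; exact this
    have := hnn p.1
    by_cases h0 : Y₁ p.1 = 0
    · simp [scomp, h0, hp] at this
    · have h1 : Y₁ p.1 = -1 := by
        rcases hY : Y₁ p.1 with _ | _ | _
        · exact absurd hY h0
        · rfl
        · exact absurd ⟨h0, by rw [hY, hp]; rfl⟩ hsep'
      simp only [scomp, if_pos h0, h1] at this
      simp at this

/-- for a positive lexicographic extension `O' = O[I]⁺` in general position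
with `I` a base of `O \ f`, the program `(O',p,f)` is bounded, and it is feasible iff
`(O,g,f)` is feasible. -/
theorem lex_ext_bounded (O : OM E) (g f : E) (hgf : g ≠ f)
    (hg : ¬ O.IsLoopE g) (hf : ¬ O.IsColoopE f)
    (O' : OM (Option E)) (L : List (E × SignType))
    (hlex : IsLexExtension O O' L)
    (hpos : ∀ p ∈ L, p.2 = 1)
    (hbase : (O.M.restrict ({f}ᶜ : Set E)).IsBase {e | e ∈ L.map Prod.fst})
    (hgenpos : ∀ Y ∈ O.cocircuits, lexSigma L Y ≠ 0) :
    O'.Bounded none ∧ (O'.Feasible ↔ O.Feasible) := by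
  obtain ⟨-, -, -, hloc, hcc⟩ := hlex
  -- any nonnegative cocircuit of O has sigma = 1
  have hsig1 : ∀ Y ∈ O.cocircuits, (∀ e, 0 ≤ Y e) → lexSigma L Y = 1 := by
    intro Y hY hYnn
    obtain ⟨p, -, hp⟩ := lexSigma_spec hpos (hgenpos Y hY)
    have := hYnn p.1
    rw [hp] at this
    rcases h : lexSigma L Y with _ | _ | _
    · exact absurd h (hgenpos Y hY)
    · rw [h] at this; simp at this
    · rfl
  constructor
  · intro Z hZ hZnn
    rw [hcc] at hZ
    rcases hZ with ⟨Y, hY, rfl⟩ | ⟨Y₁, hY₁, Y₂, hY₂, hsep, hopp, hne, -, rfl⟩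
    · have hYnn : ∀ e, 0 ≤ Y e := fun e => hZnn (some e) (by simp)
      show lexSigma L Y = 1
      exact hsig1 Y hY hYnn
    · exact absurd (no_nonneg_new hpos hsep hopp hne
        (fun e => hZnn (some e) (by simp))) not_false
  · constructor
    · rintro ⟨Z, hZ, hZnn⟩
      rw [hcc] at hZ
      rcases hZ with ⟨Y, hY, rfl⟩ | ⟨Y₁, hY₁, Y₂, hY₂, hsep, hopp, hne, -, rfl⟩
      · exact ⟨Y, hY, fun e => hZnn (some e)⟩
      · exact absurd (no_nonneg_new hpos hsep hopp hne (fun e => hZnn (some e))) not_false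
    · rintro ⟨X, hX, hXnn⟩
      refine ⟨extendP X (lexSigma L X), ?_, ?_⟩
      · rw [hcc]; exact Or.inl ⟨X, hX, rfl⟩
      · rintro (_ | e)
        · show (0 : SignType) ≤ lexSigma L X
          rw [hsig1 X hX hXnn]; decide
        · exact hXnn e
end

section
/- Projection Lemma: Let (C,X,Y) be a modular triple of cocircuits in an oriented matroid program (O,g,f) of rank ≥ 3 such that z(C ∘ X ∘ Y) is a coplane (flat of corank 3) of the underlying matroid. Assume C_g = X_g = Y_g = +, and let e ∈ supp(C) with (X ∘ Y)_e = 0. Let X¹ be obtained by eliminating g between -X and C, and Y¹ by eliminating g between -Y and C. Then X¹ ∘ Y¹ is an edge, and X →_{g,f} Y holds if and only if Y¹ →_{e,f} X¹, if and only if -X¹ →_{e,f} -Y¹. -/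
open Set

variable {E : Type*}

/- STATEMENT 19 (Projection Lemma): for a modular triple `(C,X,Y)` of cocircuits whose
joint zero set is a coplane, with `C_g = X_g = Y_g = +`, `e ∈ supp C`, `(X ∘ Y)_e = 0`,
and `X¹`, `Y¹` obtained by eliminating `g` between `-X` and `C` resp. `-Y` and `C`:
`X¹ ∘ Y¹` is an edge, and `X →_{g,f} Y ⟺ Y¹ →_{e,f} X¹ ⟺ -X¹ →_{e,f} -Y¹`. -/
namespace Proj

variable {M : Matroid E} {F G F' G' H H' K K' P : Set E} {x : E}

lemma closure_flat (M : Matroid E) (X : Set E) : M.IsFlat (M.closure X) := by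
  rw [Matroid.closure_def]
  have hne : Nonempty {F // M.IsFlat F ∧ X ∩ M.E ⊆ F} :=
    ⟨⟨M.E, M.ground_isFlat, inter_subset_right⟩⟩
  have h := Matroid.IsFlat.iInter (M := M) (Fs := fun F : {F // M.IsFlat F ∧ X ∩ M.E ⊆ F} => F.1)
    (fun F => F.2.1)
  convert h using 1
  exact sInter_eq_iInter

lemma flat_inter (hF : M.IsFlat F) (hG : M.IsFlat G) : M.IsFlat (F ∩ G) := by
  have h := Matroid.IsFlat.iInter (M := M) (Fs := fun b : Bool => bif b then F else G)
    (by rintro (_|_) <;> simpa)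
  have he : (⋂ b : Bool, bif b then F else G) = F ∩ G := by
    ext y; simp [Bool.forall_bool, and_comm]
  rwa [he] at h

lemma coline_flat (hK : M.IsColine K) : M.IsFlat K := by
  obtain ⟨H, h1, _⟩ := hK; exact h1.1

lemma coplane_flat (hP : M.IsCoplane P) : M.IsFlat P := by
  obtain ⟨G, h1, _⟩ := hP; exact h1.1

lemma hyp_covby_eq_ground (hH : M.IsHyperplane H) (h : M.FlatCovBy H G) : G = M.E := by
  rcases hH.2.2.2 _ h.2.1 h.2.2.1.1 h.2.1.subset_ground with h' | h'
  · exact absurd h'.symm (ne_of_ssubset h.2.2.1)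
  · exact h'

lemma not_hyp_and_coline (hH : M.IsHyperplane F) (hC : M.IsColine F) : False := by
  obtain ⟨H, hFH, hHE⟩ := hC
  rcases hH.2.2.2 _ hFH.2.1 hFH.2.2.1.1 hHE.1.subset_ground with h | h
  · exact hFH.2.2.1.2 (h ▸ subset_rfl)
  · exact hHE.2.2.1.2 (h ▸ subset_rfl)

variable (hE : M.E = univ)
include hE

lemma flatCovBy_closure_insert (hF : M.IsFlat F) (hx : x ∉ F) :
    M.FlatCovBy F (M.closure (insert x F)) := by
  have hiE : insert x F ⊆ M.E := by rw [hE]; exact subset_univ _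
  have hsub : F ⊆ M.closure (insert x F) :=
    (M.subset_closure F hF.subset_ground).trans (M.closure_subset_closure (subset_insert _ _))
  have hxmem : x ∈ M.closure (insert x F) := M.mem_closure_of_mem (mem_insert _ _) hiE
  refine ⟨hF, closure_flat _ _, ⟨hsub, fun h => hx (h hxmem)⟩, ?_⟩
  intro F' hF' h1 h2
  rcases eq_or_ne F' F with rfl | hne
  · exact Or.inl rfl
  obtain ⟨y, hyF', hyF⟩ : ∃ y ∈ F', y ∉ F := by
    by_contra h; push_neg at h; exact hne (subset_antisymm h h1)
  have hy : y ∈ M.closure (insert x F) \ M.closure F := by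
    rw [hF.closure]; exact ⟨h2 hyF', hyF⟩
  have hx' := Matroid.closure_exchange hy
  have hxF' : x ∈ F' := by
    have h3 : M.closure (insert y F) ⊆ M.closure F' :=
      M.closure_subset_closure (insert_subset hyF' h1)
    rw [hF'.closure] at h3
    exact h3 hx'.1
  right
  refine subset_antisymm h2 ?_
  have h4 : M.closure (insert x F) ⊆ M.closure F' :=
    M.closure_subset_closure (insert_subset hxF' h1)
  rwa [hF'.closure] at h4

lemma eq_closure_insert_of_covby (h : M.FlatCovBy F G) (hx : x ∈ G) (hx' : x ∉ F) :
    G = M.closure (insert x F) := by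
  have hiE : insert x F ⊆ M.E := by rw [hE]; exact subset_univ _
  have hxmem : x ∈ M.closure (insert x F) := M.mem_closure_of_mem (mem_insert _ _) hiE
  have hsub : F ⊆ M.closure (insert x F) :=
    (M.subset_closure F h.1.subset_ground).trans (M.closure_subset_closure (subset_insert _ _))
  have hle : M.closure (insert x F) ⊆ G := by
    have h2 : M.closure (insert x F) ⊆ M.closure G :=
      M.closure_subset_closure (insert_subset hx h.2.2.1.1)
    rwa [h.2.1.closure] at h2
  rcases h.2.2.2 _ (closure_flat _ _) hsub hle with h' | h'
  · exact absurd (h' ▸ hxmem) hx'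
  · exact h'.symm

lemma diamond (h : M.FlatCovBy F G) (h' : M.FlatCovBy F G') (hne : G ≠ G') :
    M.FlatCovBy G (M.closure (G ∪ G')) := by
  obtain ⟨y, hyG', hyG⟩ : ∃ y ∈ G', y ∉ G := by
    by_contra hc; push_neg at hc
    rcases h.2.2.2 _ h'.2.1 h'.2.2.1.1 hc with h1 | h1
    · exact (h'.2.2.1.2 (h1 ▸ subset_rfl)).elim
    · exact hne h1.symm
  have hyF : y ∉ F := fun hyF => hyG (h.2.2.1.1 hyF)
  have hG' : G' = M.closure (insert y F) := eq_closure_insert_of_covby hE h' hyG' hyF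
  have hU : M.closure (G ∪ G') = M.closure (insert y G) := by
    rw [hG', Matroid.closure_union_closure_right_eq]
    rw [union_insert, union_eq_self_of_subset_right h.2.2.1.1]
  rw [hU]
  exact flatCovBy_closure_insert hE h.2.1 hyG

omit hE in
lemma hyp_eq_of_subset (h1 : M.IsHyperplane H) (h2 : M.IsHyperplane H') (hss : H ⊆ H') :
    H = H' := by
  rcases h1.2.2.2 _ h2.1 hss h2.2.2.1.1 with h | h
  · exact h.symm
  · exact absurd (h ▸ h2.2.2.1) (lt_irrefl _)

lemma covby_coline_hyp (hK : M.IsColine K) (hG : M.FlatCovBy K G) : M.IsHyperplane G := by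
  obtain ⟨H, hKH, hH⟩ := hK
  rcases eq_or_ne G H with rfl | hne
  · exact hH
  have hj := diamond hE hKH hG (Ne.symm hne)
  have hj' := diamond hE hG hKH hne
  have hEq : M.closure (H ∪ G) = M.E := hyp_covby_eq_ground hH hj
  rw [union_comm] at hEq
  rw [hEq] at hj'
  exact hj'

lemma hyp_closure_insert_coline (hK : M.IsColine K) (hx : x ∉ K) :
    M.IsHyperplane (M.closure (insert x K)) :=
  covby_coline_hyp hE hK (flatCovBy_closure_insert hE (coline_flat hK) hx)

lemma coline_closure_insert_coplane (hP : M.IsCoplane P) (hx : x ∉ P) :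
    M.IsColine (M.closure (insert x P)) := by
  obtain ⟨K, hPK, hK⟩ := hP
  have hcov := flatCovBy_closure_insert hE hPK.1 hx
  rcases eq_or_ne (M.closure (insert x P)) K with h | hne
  · exact h ▸ hK
  have hj := diamond hE hcov hPK hne
  have hj' := diamond hE hPK hcov (Ne.symm hne)
  rw [union_comm] at hj'
  exact ⟨_, hj, covby_coline_hyp hE hK hj'⟩

lemma not_coline_and_coplane (hC : M.IsColine F) (hP : M.IsCoplane F) : False := by
  obtain ⟨H', hFH', hH'⟩ := hC
  obtain ⟨G, hFG, hG⟩ := hP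
  rcases eq_or_ne H' G with rfl | hne
  · exact not_hyp_and_coline hH' hG
  have hj := diamond hE hFG hFH' hne.symm
  have hj' := diamond hE hFH' hFG hne
  have hEq : M.closure (H' ∪ G) = M.E := hyp_covby_eq_ground hH' hj'
  rw [union_comm] at hEq
  rw [hEq] at hj
  exact not_hyp_and_coline hj hG

lemma coline_eq_of_subset (hG : M.IsColine G) (hK : M.IsColine K) (hss : G ⊆ K) : G = K := by
  by_contra hne
  obtain ⟨x, hxK, hxG⟩ : ∃ x ∈ K, x ∉ G := by
    by_contra hc; push_neg at hc; exact hne (subset_antisymm hss hc)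
  have hHyp := hyp_closure_insert_coline hE hG hxG
  have hsub : M.closure (insert x G) ⊆ K := by
    have h2 := M.closure_subset_closure (insert_subset hxK hss)
    rwa [(coline_flat hK).closure] at h2
  rcases hHyp.2.2.2 _ (coline_flat hK) hsub (coline_flat hK).subset_ground with h | h
  · exact not_hyp_and_coline (h ▸ hHyp) hK
  · obtain ⟨H, hKH, hHE⟩ := hK
    rw [h] at hKH
    exact hKH.2.2.1.2 hHE.1.subset_ground

lemma hyp_eq_closure_insert (hK : M.IsColine K) (hx : x ∉ K) (hH : M.IsHyperplane H)
    (hss : insert x K ⊆ H) : H = M.closure (insert x K) :=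
  (hyp_eq_of_subset (hyp_closure_insert_coline hE hK hx) hH (by
    have h2 := M.closure_subset_closure hss; rwa [hH.1.closure] at h2)).symm

lemma covby_of_coline_subset_hyp (hK : M.IsColine K) (hH : M.IsHyperplane H) (hss : K ⊆ H) :
    M.FlatCovBy K H := by
  have hne : K ≠ H := by rintro rfl; exact not_hyp_and_coline hH hK
  obtain ⟨x, hxH, hxK⟩ : ∃ x ∈ H, x ∉ K := by
    by_contra hc; push_neg at hc; exact hne (subset_antisymm hss hc)
  have heq := hyp_eq_closure_insert hE hK hxK hH (insert_subset hxH hss)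
  rw [heq]
  exact flatCovBy_closure_insert hE (coline_flat hK) hxK

lemma covby_of_coplane_subset_coline (hP : M.IsCoplane P) (hK : M.IsColine K) (hss : P ⊆ K) :
    M.FlatCovBy P K := by
  have hne : P ≠ K := fun h => not_coline_and_coplane hE (h ▸ hK) hP
  obtain ⟨x, hxK, hxP⟩ : ∃ x ∈ K, x ∉ P := by
    by_contra hc; push_neg at hc; exact hne (subset_antisymm hss hc)
  have hcl := coline_closure_insert_coplane hE hP hxP
  have heq : M.closure (insert x P) = K := coline_eq_of_subset hE hcl hK (by
    have h2 := M.closure_subset_closure (insert_subset hxK hss)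
    rwa [(coline_flat hK).closure] at h2)
  rw [← heq]
  exact flatCovBy_closure_insert hE (coplane_flat hP) hxP

end Proj

namespace Proj

variable {O : OM E}

lemma sneg_zero {a : SignType} : -a = 0 ↔ a = 0 := by cases a <;> decide

lemma zset_scomp (A B : E → SignType) : zset (scomp A B) = zset A ∩ zset B := by
  ext x
  simp only [zset, scomp, mem_setOf_eq, mem_inter_iff]
  by_cases h : A x = 0 <;> simp [h]

lemma zset_neg (A : E → SignType) : zset (-A) = zset A := by
  ext x
  simp only [zset, mem_setOf_eq, Pi.neg_apply]
  cases A x <;> simp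

lemma elimWit_iff (O : OM E) (g : E) (X Y Z : E → SignType) :
    O.ElimWit g X Y Z ↔ Z ∈ O.cocircuits ∧ insert g (zset X ∩ zset Y) ⊆ zset Z := by
  constructor
  · rintro ⟨h1, h2, h3⟩
    refine ⟨h1, ?_⟩
    rintro x (rfl | ⟨hx1, hx2⟩)
    · exact h2
    · by_contra hzx
      have hmem := (h3 hzx).1
      have hz : scomp (-X) Y x = 0 := by
        show (if (-X) x ≠ 0 then (-X) x else Y x) = 0
        simp [sneg_zero, show X x = 0 from hx1, show Y x = 0 from hx2]
      exact hmem hz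
  · rintro ⟨h1, h2⟩
    have hg : Z g = 0 := h2 (mem_insert _ _)
    refine ⟨h1, hg, ?_⟩
    intro x hx
    have hxg : x ≠ g := by rintro rfl; exact hx hg
    refine ⟨?_, hxg⟩
    show scomp (-X) Y x ≠ 0
    by_cases hX : X x = 0
    · by_cases hY : Y x = 0
      · exact absurd (h2 (mem_insert_of_mem _ ⟨hX, hY⟩)) hx
      · show (if (-X) x ≠ 0 then (-X) x else Y x) ≠ 0
        simp [sneg_zero, hX]
        exact hY
    · show (if (-X) x ≠ 0 then (-X) x else Y x) ≠ 0
      simp [sneg_zero, hX]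
    
lemma dirIs_iff (O : OM E) (g f : E) (X Y : E → SignType) :
    O.DirIs g f X Y 1 ↔
      ∃ Z ∈ O.cocircuits, insert g (zset X ∩ zset Y) ⊆ zset Z ∧ Z f = 1 := by
  constructor
  · rintro ⟨Z, h1, h2⟩
    rw [elimWit_iff] at h1
    exact ⟨Z, h1.1, h1.2, h2⟩
  · rintro ⟨Z, h1, h2, h3⟩
    exact ⟨Z, (elimWit_iff O g X Y Z).2 ⟨h1, h2⟩, h3⟩

lemma dir_char (O : OM E) (f x : E) (K : Set E) (hK : O.M.IsColine K) (hx : x ∉ K) :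
    (∃ Z ∈ O.cocircuits, insert x K ⊆ zset Z ∧ Z f = 1) ↔
      f ∉ O.M.closure (insert x K) := by
  constructor
  · rintro ⟨Z, hZ, hss, hZf⟩
    have hH : O.M.IsHyperplane (zset Z) := (O.hyperplane_iff _).2 ⟨Z, hZ, rfl⟩
    have heq := hyp_eq_closure_insert O.ground_eq hK hx hH hss
    rw [← heq]
    intro hmem
    rw [show (f ∈ zset Z) = (Z f = 0) from rfl] at hmem
    rw [hmem] at hZf
    exact absurd hZf (by decide)
  · intro hf
    have hH := hyp_closure_insert_coline O.ground_eq hK hx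
    obtain ⟨Z, hZ, hzZ⟩ := (O.hyperplane_iff _).1 hH
    have hss : insert x K ⊆ zset Z := by
      rw [hzZ]
      exact O.M.subset_closure _ (by rw [O.ground_eq]; exact subset_univ _)
    have hZf : Z f ≠ 0 := by
      intro h
      exact hf (hzZ ▸ (show f ∈ zset Z from h))
    rcases hs : Z f with h | h | h
    · exact absurd hs hZf
    · refine ⟨-Z, O.neg_mem Z hZ, by rw [zset_neg]; exact hss, ?_⟩
      show -(Z f) = 1
      rw [hs]; rfl
    · exact ⟨Z, hZ, hss, hs⟩

end Proj

open Proj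


/-- Projection Lemma: for a modular triple `(C,X,Y)` of cocircuits whose
joint zero set is a coplane, with `C_g = X_g = Y_g = +`, `e ∈ supp C`, `(X ∘ Y)_e = 0`,
and `X¹`, `Y¹` obtained by eliminating `g` between `-X` and `C` resp. `-Y` and `C`:
`X¹ ∘ Y¹` is an edge, and `X →_{g,f} Y ⟺ Y¹ →_{e,f} X¹ ⟺ -X¹ →_{e,f} -Y¹`. -/
theorem projection_lemma (O : OM E) (g f : E) (hgf : g ≠ f)
    (hg : ¬ O.IsLoopE g) (hf : ¬ O.IsColoopE f)
    (hrank : ∃ B, O.M.IsBase B ∧ 3 ≤ B.ncard)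
    (C X Y : E → SignType)
    (hC : C ∈ O.cocircuits) (hX : X ∈ O.cocircuits) (hY : Y ∈ O.cocircuits)
    (hCX : O.Comod C X) (hCY : O.Comod C Y) (hXY : O.Comod X Y)
    (hcop : O.M.IsCoplane (zset (scomp C (scomp X Y))))
    (hCg : C g = 1) (hXg : X g = 1) (hYg : Y g = 1)
    (e : E) (he : e ∈ supp C) (heXY : scomp X Y e = 0)
    (X1 Y1 : E → SignType)
    (hX1 : O.ElimWit g X C X1) (hY1 : O.ElimWit g Y C Y1) :
    O.M.IsColine (zset (scomp X1 Y1)) ∧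
    (O.DirIs g f X Y 1 ↔ O.DirIs e f Y1 X1 1) ∧
    (O.DirIs e f Y1 X1 1 ↔ O.DirIs e f (-X1) (-Y1) 1) := by
  have hE := O.ground_eq
  have hsubE : ∀ S : Set E, S ⊆ O.M.E := fun S => by rw [hE]; exact subset_univ S
  have hHC : O.M.IsHyperplane (zset C) := (O.hyperplane_iff _).2 ⟨C, hC, rfl⟩
  have hKX : O.M.IsColine (zset X ∩ zset C) := by
    rw [OM.Comod, zset_scomp, inter_comm] at hCX; exact hCX
  have hKY : O.M.IsColine (zset Y ∩ zset C) := by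
    rw [OM.Comod, zset_scomp, inter_comm] at hCY; exact hCY
  have hL : O.M.IsColine (zset X ∩ zset Y) := by
    rw [OM.Comod, zset_scomp] at hXY; exact hXY
  have hP : O.M.IsCoplane (zset C ∩ (zset X ∩ zset Y)) := by
    rw [zset_scomp, zset_scomp] at hcop; exact hcop
  have hgC : g ∉ zset C := by simp [zset, hCg]
  have hgX : g ∉ zset X := by simp [zset, hXg]
  have hgY : g ∉ zset Y := by simp [zset, hYg]
  have heC : e ∉ zset C := he
  have heXY' : X e = 0 ∧ Y e = 0 := by
    by_cases h : X e = 0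
    · refine ⟨h, ?_⟩
      rw [show scomp X Y e = if X e ≠ 0 then X e else Y e from rfl, if_neg (by simpa using h)]
        at heXY
      exact heXY
    · rw [show scomp X Y e = if X e ≠ 0 then X e else Y e from rfl, if_pos (by simpa using h)]
        at heXY
      exact absurd heXY h
  obtain ⟨heX, heY⟩ := heXY'
  rw [elimWit_iff] at hX1 hY1
  obtain ⟨hX1c, hX1s⟩ := hX1
  obtain ⟨hY1c, hY1s⟩ := hY1
  have hHX1 : O.M.IsHyperplane (zset X1) := (O.hyperplane_iff _).2 ⟨X1, hX1c, rfl⟩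
  have hHY1 : O.M.IsHyperplane (zset Y1) := (O.hyperplane_iff _).2 ⟨Y1, hY1c, rfl⟩
  have hgKX : g ∉ zset X ∩ zset C := fun h => hgX h.1
  have hgKY : g ∉ zset Y ∩ zset C := fun h => hgY h.1
  have hX1eq : zset X1 = O.M.closure (insert g (zset X ∩ zset C)) :=
    hyp_eq_closure_insert hE hKX hgKX hHX1 hX1s
  have hY1eq : zset Y1 = O.M.closure (insert g (zset Y ∩ zset C)) :=
    hyp_eq_closure_insert hE hKY hgKY hHY1 hY1s
  have hPsubKX : zset C ∩ (zset X ∩ zset Y) ⊆ zset X ∩ zset C := fun t ht => ⟨ht.2.1, ht.1⟩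
  have hPsubKY : zset C ∩ (zset X ∩ zset Y) ⊆ zset Y ∩ zset C := fun t ht => ⟨ht.2.2, ht.1⟩
  have hPKX : O.M.FlatCovBy (zset C ∩ (zset X ∩ zset Y)) (zset X ∩ zset C) :=
    covby_of_coplane_subset_coline hE hP hKX hPsubKX
  have hPKY : O.M.FlatCovBy (zset C ∩ (zset X ∩ zset Y)) (zset Y ∩ zset C) :=
    covby_of_coplane_subset_coline hE hP hKY hPsubKY
  have hKXY : zset X ∩ zset C ≠ zset Y ∩ zset C := by
    intro h
    have hsub : zset X ∩ zset C ⊆ zset C ∩ (zset X ∩ zset Y) := by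
      intro t ht
      exact ⟨ht.2, ht.1, (h ▸ ht).1⟩
    have heq : zset C ∩ (zset X ∩ zset Y) = zset X ∩ zset C :=
      subset_antisymm hPsubKX hsub
    rw [heq] at hP
    exact not_coline_and_coplane hE hKX hP
  have hne1 : zset X1 ≠ zset Y1 := by
    intro h
    have hJ := diamond hE hPKX hPKY hKXY
    have hJH := covby_coline_hyp hE hKX hJ
    have hsubC : O.M.closure ((zset X ∩ zset C) ∪ (zset Y ∩ zset C)) ⊆ zset C := by
      have hu2 : (zset X ∩ zset C) ∪ (zset Y ∩ zset C) ⊆ zset C :=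
        union_subset inter_subset_right inter_subset_right
      have h2 := O.M.closure_subset_closure hu2
      rwa [hHC.1.closure] at h2
    have hCeq := hyp_eq_of_subset hJH hHC hsubC
    have hsubH : O.M.closure ((zset X ∩ zset C) ∪ (zset Y ∩ zset C)) ⊆ zset X1 := by
      have hu : (zset X ∩ zset C) ∪ (zset Y ∩ zset C) ⊆ zset X1 := by
        apply union_subset
        · exact fun t ht => hX1s (mem_insert_of_mem _ ht)
        · intro t ht
          rw [h]
          exact hY1s (mem_insert_of_mem _ ht)
      have h2 := O.M.closure_subset_closure hu
      rwa [hHX1.1.closure] at h2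
    have hfin := hyp_eq_of_subset hHC hHX1 (hCeq ▸ hsubH)
    have hgmem : g ∈ zset X1 := hX1s (mem_insert _ _)
    rw [← hfin] at hgmem
    exact hgC hgmem
  have hgP : g ∉ zset C ∩ (zset X ∩ zset Y) := fun h => hgC h.1
  have heP : e ∉ zset C ∩ (zset X ∩ zset Y) := fun h => heC h.1
  have hL0 : O.M.IsColine (O.M.closure (insert g (zset C ∩ (zset X ∩ zset Y)))) :=
    coline_closure_insert_coplane hE hP hgP
  have hL0X1 : O.M.closure (insert g (zset C ∩ (zset X ∩ zset Y))) ⊆ zset X1 := by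
    rw [hX1eq]
    exact O.M.closure_subset_closure (insert_subset_insert hPsubKX)
  have hL0Y1 : O.M.closure (insert g (zset C ∩ (zset X ∩ zset Y))) ⊆ zset Y1 := by
    rw [hY1eq]
    exact O.M.closure_subset_closure (insert_subset_insert hPsubKY)
  have hcovL0 := covby_of_coline_subset_hyp hE hL0 hHX1 hL0X1
  have hLne : zset X1 ∩ zset Y1 ≠ zset X1 := by
    intro h
    have hss : zset X1 ⊆ zset Y1 := by rw [← h]; exact inter_subset_right
    exact hne1 (hyp_eq_of_subset hHX1 hHY1 hss)
  have hL' : zset X1 ∩ zset Y1 = O.M.closure (insert g (zset C ∩ (zset X ∩ zset Y))) := by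
    rcases hcovL0.2.2.2 _ (flat_inter hHX1.1 hHY1.1) (subset_inter hL0X1 hL0Y1)
      inter_subset_left with h | h
    · exact h
    · exact absurd h hLne
  have goal1 : O.M.IsColine (zset (scomp X1 Y1)) := by
    rw [zset_scomp, hL']; exact hL0
  have hLeq : zset X ∩ zset Y = O.M.closure (insert e (zset C ∩ (zset X ∩ zset Y))) := by
    have hc := coline_closure_insert_coplane hE hP heP
    refine (coline_eq_of_subset hE hc hL ?_).symm
    have hss : insert e (zset C ∩ (zset X ∩ zset Y)) ⊆ zset X ∩ zset Y :=
      insert_subset ⟨heX, heY⟩ (fun t ht => ht.2)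
    have h2 := O.M.closure_subset_closure hss
    rwa [(coline_flat hL).closure] at h2
  have heL0 : e ∉ O.M.closure (insert g (zset C ∩ (zset X ∩ zset Y))) := by
    intro hi
    have hPL0 : zset C ∩ (zset X ∩ zset Y) ⊆
        O.M.closure (insert g (zset C ∩ (zset X ∩ zset Y))) :=
      (subset_insert g _).trans (O.M.subset_closure _ (hsubE _))
    have hsub : O.M.closure (insert e (zset C ∩ (zset X ∩ zset Y))) ⊆
        O.M.closure (insert g (zset C ∩ (zset X ∩ zset Y))) := by
      have h2 := O.M.closure_subset_closure (insert_subset hi hPL0)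
      rwa [(coline_flat hL0).closure] at h2
    have h3 := coline_eq_of_subset hE (coline_closure_insert_coplane hE hP heP) hL0 hsub
    have hgL0 : g ∈ O.M.closure (insert g (zset C ∩ (zset X ∩ zset Y))) :=
      O.M.mem_closure_of_mem (mem_insert _ _) (hsubE _)
    have hgm : g ∈ zset X ∩ zset Y := by rw [hLeq, h3]; exact hgL0
    exact hgX hgm.1
  have hgL : g ∉ zset X ∩ zset Y := fun h => hgX h.1
  have hHstar : O.M.closure (insert g (zset X ∩ zset Y)) =
      O.M.closure (insert e (O.M.closure (insert g (zset C ∩ (zset X ∩ zset Y))))) := by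
    conv_lhs => rw [hLeq, Matroid.closure_insert_closure_eq_closure_insert, Set.insert_comm]
    rw [Matroid.closure_insert_closure_eq_closure_insert]
  have d1 : O.DirIs g f X Y 1 ↔ f ∉ O.M.closure (insert g (zset X ∩ zset Y)) := by
    rw [dirIs_iff]; exact dir_char O f g _ hL hgL
  have hYXint : zset Y1 ∩ zset X1 = O.M.closure (insert g (zset C ∩ (zset X ∩ zset Y))) := by
    rw [inter_comm]; exact hL'
  have d2 : O.DirIs e f Y1 X1 1 ↔
      f ∉ O.M.closure (insert e (O.M.closure (insert g (zset C ∩ (zset X ∩ zset Y))))) := by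
    rw [dirIs_iff, hYXint]; exact dir_char O f e _ hL0 heL0
  have d3 : O.DirIs e f (-X1) (-Y1) 1 ↔
      f ∉ O.M.closure (insert e (O.M.closure (insert g (zset C ∩ (zset X ∩ zset Y))))) := by
    rw [dirIs_iff, zset_neg, zset_neg, hL']; exact dir_char O f e _ hL0 heL0
  exact ⟨goal1, by rw [d1, d2, hHstar], by rw [d2, d3]⟩
end
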